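/- Let g_aux ∈ ℝ^D, S a subspace with orthonormal basis {u_i}, g_prim ∈ S, and decompose g_aux = g⊥ + g⁺ + g⁻ where g⊥ ∈ Sᗮ and g⁺, g⁻ are the in-span components agreeing/disagreeing in coordinate sign with g_prim. Then for η⊥, η⁺ ≥ 0 and η⁻ ≤ 0, the reweighted vector g̃ = η⊥ g⊥ + η⁺ g⁺ + η⁻ g⁻ satisfies ⟨g̃, g_prim⟩ ≥ 0. -/

import Mathlib

/-!
In the orthonormal coordinates of `S`, `g⊥` has all coordinates zero, so it is orthogonal to
`g_prim ∈ S`, while `⟪g⁺, g_prim⟫` and `⟪g⁻, g_prim⟫` are sums of the coordinate products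
`⟪g_aux, u_i⟫⟪g_prim, u_i⟫` that are nonnegative, resp. negative.
-/

open RealInnerProductSpace Finset

section

variable {E ι : Type*} [NormedAddCommGroup E] [InnerProductSpace ℝ E]

theorem real_inner_sum_smul_left (s : Finset ι) (c : ι → ℝ) (v : ι → E) (w : E) :
    ⟪∑ i ∈ s, c i • v i, w⟫ = ∑ i ∈ s, c i * ⟪v i, w⟫ := by
  simp_rw [sum_inner, real_inner_smul_left]

theorem Orthonormal.inner_sub_sum_inner_smul_sum_smul [Fintype ι] {u : ι → E}
    (hu : Orthonormal ℝ u) (x : E) (c : ι → ℝ) :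
    ⟪x - ∑ i, ⟪u i, x⟫ • u i, ∑ i, c i • u i⟫ = 0 := by
  rw [inner_sum]
  refine sum_eq_zero fun j _ => ?_
  rw [real_inner_smul_right, inner_sub_left, hu.inner_left_fintype, real_inner_comm]
  simp

end

theorem Finset.sum_sub_sum_filter_nonneg_nonpos {ι : Type*} (s : Finset ι) (f : ι → ℝ) :
    ∑ i ∈ s, f i - ∑ i ∈ s.filter (fun i => 0 ≤ f i), f i ≤ 0 := by
  rw [← sum_filter_add_sum_filter_not s (fun i => 0 ≤ f i), add_sub_cancel_left]
  exact sum_nonpos fun i hi => (not_le.mp (mem_filter.mp hi).2).le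

theorem stmt_5_general (D K : ℕ) (u : Fin K → EuclideanSpace ℝ (Fin D))
    (hu : Orthonormal ℝ u)
    (gprim gaux : EuclideanSpace ℝ (Fin D))
    (pc : Fin K → ℝ) (hprim : gprim = ∑ i, pc i • u i)
    (gpm gplus gminus gperp : EuclideanSpace ℝ (Fin D))
    (hpm : gpm = ∑ i, ⟪u i, gaux⟫ • u i)
    (hplus : gplus = ∑ i ∈ univ.filter (fun i => 0 ≤ ⟪u i, gaux⟫ * ⟪u i, gprim⟫),
        ⟪u i, gaux⟫ • u i)
    (hminus : gminus = gpm - gplus)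
    (hperp : gperp = gaux - gpm)
    (ηperp ηplus ηminus : ℝ)
    (hηplus : 0 ≤ ηplus) (hηminus : ηminus ≤ 0) :
    0 ≤ ⟪ηperp • gperp + ηplus • gplus + ηminus • gminus, gprim⟫ := by
  have hperp_orth : ⟪gperp, gprim⟫ = 0 := by
    rw [hperp, hpm, hprim]
    exact hu.inner_sub_sum_inner_smul_sum_smul gaux pc
  have hplus_nonneg : 0 ≤ ⟪gplus, gprim⟫ := by
    rw [hplus, real_inner_sum_smul_left]
    exact sum_nonneg fun i hi => (mem_filter.mp hi).2
  have hminus_nonpos : ⟪gminus, gprim⟫ ≤ 0 := by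
    rw [hminus, inner_sub_left, hpm, hplus, real_inner_sum_smul_left, real_inner_sum_smul_left]
    exact sum_sub_sum_filter_nonneg_nonpos _ _
  rw [inner_add_left, inner_add_left, real_inner_smul_left, real_inner_smul_left,
    real_inner_smul_left, hperp_orth, mul_zero, zero_add]
  exact add_nonneg (mul_nonneg hηplus hplus_nonneg)
    (mul_nonneg_of_nonpos_of_nonpos hηminus hminus_nonpos)

/-- With `g_aux = g⊥ + g⁺ + g⁻` (in-span projection split by coordinate-sign
agreement with `g_prim ∈ S`, `g⊥` the out-of-span part), if `η⊥, η⁺ ≥ 0` and `η⁻ ≤ 0`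
then `⟪η⊥ g⊥ + η⁺ g⁺ + η⁻ g⁻, g_prim⟫ ≥ 0`. -/
theorem stmt_5 (D K : ℕ) (u : Fin K → EuclideanSpace ℝ (Fin D))
    (hu : Orthonormal ℝ u)
    (gprim gaux : EuclideanSpace ℝ (Fin D))
    (pc : Fin K → ℝ) (hprim : gprim = ∑ i, pc i • u i)
    (gpm gplus gminus gperp : EuclideanSpace ℝ (Fin D))
    (hpm : gpm = ∑ i, ⟪u i, gaux⟫ • u i)
    (hplus : gplus = ∑ i ∈ univ.filter (fun i => 0 ≤ ⟪u i, gaux⟫ * ⟪u i, gprim⟫),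
        ⟪u i, gaux⟫ • u i)
    (hminus : gminus = gpm - gplus)
    (hperp : gperp = gaux - gpm)
    (ηperp ηplus ηminus : ℝ)
    (hηperp : 0 ≤ ηperp) (hηplus : 0 ≤ ηplus) (hηminus : ηminus ≤ 0) :
    0 ≤ ⟪ηperp • gperp + ηplus • gplus + ηminus • gminus, gprim⟫ :=
  stmt_5_general D K u hu gprim gaux pc hprim gpm gplus gminus gperp hpm hplus hminus hperp ηperp
    ηplus ηminus hηplus hηminus
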